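/- arXiv:2605.10866 — 5 statements merged into one kernel-verified Lean document; each statement's English description precedes it below -/
import Mathlib

section
/- Let D be the m×n matrix (m ≤ n) whose first row consists of independent variables x_1,…,x_n and whose remaining rows are constant complex vectors. Then the m×m minors of D, which are linear forms in x_1,…,x_n, span a subspace of dimension at most n − m + 1 in the space of linear forms. -/
/-!
Substituting a constant row `a i` for the variable row repeats a row, so every maximal minor is
a linear form vanishing on the span `W` of the constant rows. If these `m - 1` rows are linearly
independent, the minors lie in the annihilator of `W`, of dimension `n - (m - 1)`; otherwise every
minor vanishes identically.
-/

open Module Matrix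

section

variable {K ι κ : Type*} [Field K] [Fintype ι] [DecidableEq ι]

def minorReplacingRow (a : ι → κ → K) (z : ι) (s : ι → κ) : Dual K (κ → K) where
  toFun x := (updateRow (of fun i j => a i (s j)) z (x ∘ s)).det
  map_add' x y := det_updateRow_add _ z (x ∘ s) (y ∘ s)
  map_smul' c x := det_updateRow_smul _ z c (x ∘ s)

variable (a : ι → κ → K) (z : ι)

theorem minorReplacingRow_apply (s : ι → κ) (x : κ → K) :
    minorReplacingRow a z s x = (of fun i j => if i = z then x (s j) else a i (s j)).det := by
  change det _ = det _
  congr 1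
  ext i j
  by_cases h : i = z <;> simp [updateRow_apply, h]

theorem minorReplacingRow_apply_row (s : ι → κ) {i : ι} (hi : i ≠ z) :
    minorReplacingRow a z s (a i) = 0 :=
  det_updateRow_eq_zero (M := of fun i j => a i (s j)) hi

theorem minorReplacingRow_mem_dualAnnihilator (s : ι → κ) :
    minorReplacingRow a z s ∈
      (Submodule.span K (Set.range fun i : {i // i ≠ z} => a i)).dualAnnihilator := by
  have hker : Submodule.span K (Set.range fun i : {i // i ≠ z} => a i) ≤
      LinearMap.ker (minorReplacingRow a z s) :=
    Submodule.span_le.mpr <| Set.range_subset_iff.mpr fun i => minorReplacingRow_apply_row a z s i.2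
  exact (Submodule.mem_dualAnnihilator _).mpr fun w hw => hker hw

theorem minorReplacingRow_eq_zero_of_not_linearIndependent
    (h : ¬ LinearIndependent K fun i : {i // i ≠ z} => a i) (s : ι → κ) :
    minorReplacingRow a z s = 0 := by
  ext x
  refine det_eq_zero_of_not_linearIndependent_rows fun hli => h ?_
  have hrows : LinearMap.funLeft K K s ∘ (fun i : {i // i ≠ z} => a i) =
      fun i => updateRow (of fun i j => a i (s j)) z (x ∘ s) i.1 := by
    ext ⟨i, hi⟩ j
    simp [updateRow_apply, hi, LinearMap.funLeft]
  exact LinearIndependent.of_comp (LinearMap.funLeft K K s)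
    (hrows ▸ hli.comp Subtype.val Subtype.val_injective)

theorem finrank_span_range_minorReplacingRow_le [Fintype κ] :
    finrank K (Submodule.span K (Set.range (minorReplacingRow a z))) ≤
      Fintype.card κ - Fintype.card ι + 1 := by
  by_cases hli : LinearIndependent K fun i : {i // i ≠ z} => a i
  · set W := Submodule.span K (Set.range fun i : {i // i ≠ z} => a i)
    have hW : finrank K W = Fintype.card ι - 1 := by
      rw [finrank_span_eq_card hli, Fintype.card_subtype_compl, Fintype.card_subtype_eq]
    have hann : finrank K W + finrank K W.dualAnnihilator = Fintype.card κ := by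
      rw [Subspace.finrank_add_finrank_dualAnnihilator_eq, finrank_fintype_fun_eq_card]
    have hle : Submodule.span K (Set.range (minorReplacingRow a z)) ≤ W.dualAnnihilator :=
      Submodule.span_le.mpr <| Set.range_subset_iff.mpr (minorReplacingRow_mem_dualAnnihilator a z)
    have hι : 0 < Fintype.card ι := Fintype.card_pos_iff.mpr ⟨z⟩
    have := Submodule.finrank_mono hle
    omega
  · have hzero : Set.range (minorReplacingRow a z) ⊆ {0} :=
      Set.range_subset_iff.mpr (minorReplacingRow_eq_zero_of_not_linearIndependent a z hli)
    rw [Submodule.span_eq_bot.mpr hzero, finrank_bot]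
    exact Nat.zero_le _

end

theorem minors_of_variable_row_matrix_span_bound_general (m n : ℕ) (hm : 0 < m)
    (a : Fin m → Fin n → ℂ) :
    Module.finrank ℂ (Submodule.span ℂ
      { f : (Fin n → ℂ) → ℂ | ∃ s : Fin m → Fin n, StrictMono s ∧
          f = fun x => Matrix.det (Matrix.of fun (i j : Fin m) =>
            if i = (⟨0, hm⟩ : Fin m) then x (s j) else a i (s j)) })
      ≤ n - m + 1 := by
  set ℓ := LinearMap.ltoFun ℂ (Fin n → ℂ) ℂ ℂ
  have hsub : { f : (Fin n → ℂ) → ℂ | ∃ s : Fin m → Fin n, StrictMono s ∧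
      f = fun x => Matrix.det (Matrix.of fun (i j : Fin m) =>
        if i = (⟨0, hm⟩ : Fin m) then x (s j) else a i (s j)) } ⊆
      ℓ '' Set.range (minorReplacingRow a ⟨0, hm⟩) := by
    rintro f ⟨s, -, rfl⟩
    exact ⟨_, ⟨s, rfl⟩, funext (minorReplacingRow_apply a _ s)⟩
  calc _ ≤ finrank ℂ ((Submodule.span ℂ (Set.range (minorReplacingRow a ⟨0, hm⟩))).map ℓ) :=
        Submodule.finrank_mono <| (Submodule.span_mono hsub).trans (Submodule.map_span ℓ _).ge
    _ ≤ finrank ℂ (Submodule.span ℂ (Set.range (minorReplacingRow a ⟨0, hm⟩))) :=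
        Submodule.finrank_map_le _ _
    _ ≤ n - m + 1 := by
        simpa using finrank_span_range_minorReplacingRow_le a ⟨0, hm⟩

/-- for the m×n matrix D whose first row consists of the variables
x_1,…,x_n and whose other rows are constant, the maximal minors of D (which are
linear forms in x, one for each strictly increasing choice of m columns) span a
space of dimension at most n - m + 1. -/
theorem minors_of_variable_row_matrix_span_bound (m n : ℕ) (hm : 0 < m)
    (hmn : m ≤ n) (a : Fin m → Fin n → ℂ) :
    Module.finrank ℂ (Submodule.span ℂ
      { f : (Fin n → ℂ) → ℂ | ∃ s : Fin m → Fin n, StrictMono s ∧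
          f = fun x => Matrix.det (Matrix.of fun (i j : Fin m) =>
            if i = (⟨0, hm⟩ : Fin m) then x (s j) else a i (s j)) })
      ≤ n - m + 1 :=
  minors_of_variable_row_matrix_span_bound_general m n hm a
end

section
/- Let a_{ji} ∈ C (2 ≤ j ≤ m, 1 ≤ i ≤ n, m ≤ n), and for ℓ = 1,…,t let D^{(ℓ)} be the m×n complex matrix whose first row is (c_1^{(ℓ)},…,c_n^{(ℓ)}) and whose remaining rows are the fixed rows (a_{j1},…,a_{jn}). Let B be the t × C(n,m) matrix whose (ℓ,α) entry is the m×m minor of D^{(ℓ)} on the column set α. Then rank(B) ≤ n − m + 1. -/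
/-!
Each entry of `B` is the value at `c⁽ℓ⁾` of a linear functional `φ_α` of the first row (the minor
on the columns `α`), so the row space of `B` lies in the range of `v ↦ (φ_α v)_α`. Every `φ_α`
kills the fixed rows `a_j` (a determinant with two equal rows vanishes), so if these are linearly
independent, rank-nullity gives `rank B ≤ n - (m - 1)`; if they are dependent, every `φ_α` is zero.
-/

open Module

theorem Matrix.rank_of_linearMap_apply_le {K κ σ τ : Type*} [Field K] [Fintype κ] [Fintype σ]
    [Finite τ] (φ : σ → (κ → K) →ₗ[K] K) (c : τ → κ → K) (W : Submodule K (κ → K))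
    (hW : ∀ s, W ≤ LinearMap.ker (φ s)) :
    (Matrix.of fun l s => φ s (c l)).rank ≤ Fintype.card κ - finrank K W := by
  set Φ := LinearMap.pi φ
  have hrows : Submodule.span K (Set.range (Matrix.of fun l s => φ s (c l)).row) ≤
      LinearMap.range Φ :=
    Submodule.span_le.mpr <| Set.range_subset_iff.mpr fun l => ⟨c l, rfl⟩
  have hker : W ≤ LinearMap.ker Φ := (LinearMap.ker_pi φ).symm ▸ le_iInf hW
  have hnullity := Φ.finrank_range_add_finrank_ker
  rw [finrank_fintype_fun_eq_card] at hnullity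
  rw [Matrix.rank_eq_finrank_span_row]
  have := Submodule.finrank_mono hrows
  have := Submodule.finrank_mono hker
  omega

section MinorForm

variable {K ι κ : Type*} [Field K] [Fintype ι] [DecidableEq ι]

def minorForm (a : ι → κ → K) (z : ι) (s : ι → κ) : (κ → K) →ₗ[K] K :=
  (Matrix.detRowAlternating.compLinearMap (LinearMap.funLeft K K s)).toMultilinearMap.toLinearMap
    a z

theorem minorForm_apply (a : ι → κ → K) (z : ι) (s : ι → κ) (v : κ → K) :
    minorForm a z s v = (Matrix.of fun i j => if i = z then v (s j) else a i (s j)).det := by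
  change Matrix.detRowAlternating _ = Matrix.detRowAlternating _
  congr 1
  ext i j
  by_cases hi : i = z <;> simp [hi, LinearMap.funLeft]

theorem minorForm_apply_row_eq_zero {a : ι → κ → K} {z i : ι} (hi : i ≠ z) (s : ι → κ) :
    minorForm a z s (a i) = 0 :=
  (Matrix.detRowAlternating.compLinearMap (LinearMap.funLeft K K s)).map_eq_zero_of_eq
    (Function.update a z (a i)) (i := i) (j := z) (by simp [hi]) hi

theorem span_rows_le_ker_minorForm (a : ι → κ → K) (z : ι) (s : ι → κ) :
    Submodule.span K (Set.range fun i : {i // i ≠ z} => a i) ≤ LinearMap.ker (minorForm a z s) :=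
  Submodule.span_le.mpr <| Set.range_subset_iff.mpr fun i => minorForm_apply_row_eq_zero i.2 s

theorem minorForm_eq_zero {a : ι → κ → K} {z : ι}
    (ha : ¬LinearIndependent K (fun i : {i // i ≠ z} => a i)) (s : ι → κ) :
    minorForm a z s = 0 := by
  ext v
  refine (Matrix.detRowAlternating.compLinearMap (LinearMap.funLeft K K s)).map_linearDependent
    (Function.update a z v) fun hind => ha ?_
  have hrest : (fun i : {i // i ≠ z} => a i) = Function.update a z v ∘ Subtype.val :=
    funext fun i => (Function.update_of_ne i.2 _ _).symm
  exact hrest ▸ hind.comp _ Subtype.val_injective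

end MinorForm

open Classical in
theorem rank_of_minor_matrix_le_general (m n t : ℕ) (hm : 0 < m)
    (a : Fin m → Fin n → ℂ) (c : Fin t → Fin n → ℂ) :
    (Matrix.of fun (l : Fin t) (s : Fin m → Fin n) =>
      if StrictMono s then
        Matrix.det (Matrix.of fun (i j : Fin m) =>
          if i = (⟨0, hm⟩ : Fin m) then c l (s j) else a i (s j))
      else 0).rank ≤ n - m + 1 := by
  set z : Fin m := ⟨0, hm⟩
  set φ : (Fin m → Fin n) → (Fin n → ℂ) →ₗ[ℂ] ℂ :=
    fun s => if StrictMono s then minorForm a z s else 0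
  suffices (Matrix.of fun l s => φ s (c l)).rank ≤ n - m + 1 by
    convert this using 3
    ext l s
    by_cases hs : StrictMono s <;> simp [φ, hs, minorForm_apply]
  by_cases hind : LinearIndependent ℂ (fun i : {i // i ≠ z} => a i)
  · have hrank := Matrix.rank_of_linearMap_apply_le φ c _ fun s => by
      by_cases hs : StrictMono s
      · simpa [φ, hs] using span_rows_le_ker_minorForm a z s
      · simp [φ, hs]
    simp only [finrank_span_eq_card hind, ne_eq, Fintype.card_subtype_compl, Fintype.card_unique,
      Fintype.card_fin] at hrank
    omega
  · have hrank := Matrix.rank_of_linearMap_apply_le φ c ⊤ fun s => by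
      simp [φ, minorForm_eq_zero hind]
    simp only [finrank_top, finrank_fintype_fun_eq_card, Fintype.card_fin] at hrank
    omega

open Classical in
/-- let D⁽ℓ⁾ (ℓ = 1,…,t) be m×n matrices with varying first row
c⁽ℓ⁾ and common remaining rows a_j; let B be the matrix whose (ℓ,α) entry is the
maximal minor of D⁽ℓ⁾ on the (strictly increasing) column set α. Then
rank B ≤ n - m + 1. -/
theorem rank_of_minor_matrix_le (m n t : ℕ) (hm : 0 < m) (hmn : m ≤ n)
    (a : Fin m → Fin n → ℂ) (c : Fin t → Fin n → ℂ) :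
    (Matrix.of fun (l : Fin t) (s : Fin m → Fin n) =>
      if StrictMono s then
        Matrix.det (Matrix.of fun (i j : Fin m) =>
          if i = (⟨0, hm⟩ : Fin m) then c l (s j) else a i (s j))
      else 0).rank ≤ n - m + 1 :=
  rank_of_minor_matrix_le_general m n t hm a c
end

section
/- Let A be a p×q×r complex hypermatrix with 2 ≤ p ≤ q ≤ r, and suppose (P,Q,T) ∈ K_A with P = Q = T = (1,0,…,0). Then a_{11k} = 0 for all k, a_{1j1} = 0 for all j, a_{i11} = 0 for all i, and the Jacobian matrix of the scheme 𝓛 at P has all entries in its first column equal to zero, while the entry in row i (2 ≤ i ≤ p) and column indexed by α = (k_1,…,k_q) equals the determinant of the q×q matrix whose first row is (a_{i1k_1},…,a_{i1k_q}) and whose subsequent rows are (a_{1jk_1},…,a_{1jk_q}) for j = 2,…,q. Consequently rank J_𝓛(P) ≤ min{r−q, p−1}, so P is a degenerate point of 𝓛. -/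
open Matrix

/-- The q×r matrix of linear forms in x associated to A, evaluated at x. -/
noncomputable def Lmat {p q r : ℕ} (A : Fin p → Fin q → Fin r → ℂ) (x : Fin p → ℂ) :
    Matrix (Fin q) (Fin r) ℂ := Matrix.of fun j k => ∑ i, A i j k * x i

/-- The p×r matrix of linear forms in y associated to A, evaluated at y. -/
noncomputable def Mmat {p q r : ℕ} (A : Fin p → Fin q → Fin r → ℂ) (y : Fin q → ℂ) :
    Matrix (Fin p) (Fin r) ℂ := Matrix.of fun i k => ∑ j, A i j k * y j

/-- The p×q matrix of linear forms in z associated to A, evaluated at z. -/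
noncomputable def Nmat {p q r : ℕ} (A : Fin p → Fin q → Fin r → ℂ) (z : Fin r → ℂ) :
    Matrix (Fin p) (Fin q) ℂ := Matrix.of fun i j => ∑ k, A i j k * z k

/-!
At `P = e₁` the matrix `L(P)` has zero first row, because `a₁₁ₖ = 0`. Along the line `P + t eᵢ`
the first row of every maximal minor is therefore `t` times the `i`-th slice, so `L_α(P + t eᵢ)`
is `t` times a polynomial in `t`, and `∂ᵢ L_α(P)` is the minor of `L(P)` with its first row
replaced by `(a_{i1k})ₖ`. Hence row `i` of the Jacobian is `Φ(a_{i1·})` for one linear map `Φ`.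
Row `1` vanishes, giving rank `≤ p - 1`. All rows lie in `Φ(U)` with `U = {v | v₁ = 0}`,
and `Φ` kills the rows `a_{1j·} ∈ U`, `j ≥ 2`, of `L(P)`: if these are independent,
`dim Φ(U) ≤ (r - 1) - (q - 1)`; if not, every minor vanishes and `Φ = 0`.
-/

section Calculus

variable {𝕜 E n : Type*} [NontriviallyNormedField 𝕜] [NormedAddCommGroup E] [NormedSpace 𝕜 E]
  [Fintype n] [DecidableEq n]

theorem Differentiable.matrix_det {M : E → Matrix n n 𝕜}
    (hM : ∀ i j, Differentiable 𝕜 fun x => M x i j) : Differentiable 𝕜 fun x => (M x).det := by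
  simp only [det_apply']
  fun_prop

theorem hasDerivAt_det_add_smul_of_row_eq_zero {M N : Matrix n n 𝕜} {j₀ : n} (hM : M j₀ = 0) :
    HasDerivAt (fun t : 𝕜 => (M + t • N).det) (M.updateRow j₀ (N j₀)).det 0 := by
  set g : 𝕜 → 𝕜 := fun t => ((M + t • N).updateRow j₀ (N j₀)).det
  have hfactor : (fun t : 𝕜 => (M + t • N).det) = fun t => t * g t := by
    ext t
    have hrow : (M + t • N) j₀ = t • N j₀ := by
      ext m
      simp [congrFun hM m]
    rw [← det_updateRow_smul, ← hrow, updateRow_eq_self]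
  have hg : Differentiable 𝕜 g :=
    Differentiable.matrix_det fun i j => by
      simp only [updateRow_apply, Matrix.add_apply, Matrix.smul_apply, smul_eq_mul]
      split_ifs <;> fun_prop
  rw [hfactor]
  simpa [g] using (hasDerivAt_id' (0 : 𝕜)).fun_mul (hg 0).hasDerivAt

theorem fderiv_det_pencil_single_apply {ι : Type*} [Fintype ι] [DecidableEq ι]
    (B : ι → Matrix n n 𝕜) {i₀ : ι} {j₀ : n} (hB : B i₀ j₀ = 0) (i : ι) :
    fderiv 𝕜 (fun x : ι → 𝕜 => (of fun j m => ∑ i', B i' j m * x i').det)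
      (Pi.single i₀ 1) (Pi.single i 1) = ((B i₀).updateRow j₀ (B i j₀)).det := by
  have hdiff : Differentiable 𝕜 fun x : ι → 𝕜 => (of fun j m => ∑ i', B i' j m * x i').det :=
    Differentiable.matrix_det fun j m => by simp only [of_apply]; fun_prop
  rw [← (hdiff _).lineDeriv_eq_fderiv]
  refine HasLineDerivAt.lineDeriv ?_
  unfold HasLineDerivAt
  refine (hasDerivAt_det_add_smul_of_row_eq_zero (N := B i) hB).congr_of_eventuallyEq
    (Filter.Eventually.of_forall fun t => ?_)
  show (of fun j m => ∑ i', B i' j m * (Pi.single i₀ 1 + t • Pi.single i 1 : ι → 𝕜) i').det =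
    (B i₀ + t • B i).det
  congr 1
  ext j m
  simp [Pi.single_apply, mul_add, Finset.sum_add_distrib, mul_comm]

end Calculus

section LinearAlgebra

variable {K n k : Type*} [Field K] [Fintype n] [DecidableEq n]

def updateRowMinors (C : Matrix n k K) (j₀ : n) : (k → K) →ₗ[K] (n → k) → K where
  toFun v s := ((C.submatrix id s).updateRow j₀ (v ∘ s)).det
  map_add' v w := by
    ext s
    exact det_updateRow_add _ _ _ _
  map_smul' c v := by
    ext s
    exact det_updateRow_smul _ _ _ _

theorem updateRowMinors_apply (C : Matrix n k K) (j₀ : n) (v : k → K) (s : n → k) :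
    updateRowMinors C j₀ v s = ((C.submatrix id s).updateRow j₀ (v ∘ s)).det :=
  rfl

theorem updateRowMinors_row_eq_zero (C : Matrix n k K) {j₀ j : n} (hj : j ≠ j₀) :
    updateRowMinors C j₀ (C j) = 0 := by
  ext s
  refine det_zero_of_row_eq hj.symm ?_
  rw [updateRow_self, updateRow_ne hj]
  rfl

theorem updateRowMinors_eq_zero_of_not_linearIndependent {C : Matrix n k K} {j₀ : n}
    (h : ¬LinearIndependent K fun j : {j // j ≠ j₀} => C j) : updateRowMinors C j₀ = 0 := by
  ext v s
  by_contra hdet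
  apply h
  have hrows : LinearMap.funLeft K K s ∘ (fun j : {j // j ≠ j₀} => C j) =
      fun j => (C.submatrix id s).updateRow j₀ (v ∘ s) j.1 := by
    ext j m
    simp [updateRow_ne j.2, LinearMap.funLeft]
  refine LinearIndependent.of_comp (LinearMap.funLeft K K s) ?_
  rw [hrows]
  exact (linearIndependent_rows_of_det_ne_zero hdet).comp _ Subtype.val_injective

theorem Submodule.finrank_map_add_card_le {V W ι : Type*} [AddCommGroup V] [Module K V]
    [AddCommGroup W] [Module K W] [Fintype ι] (f : V →ₗ[K] W) (U : Submodule K V)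
    [FiniteDimensional K U] {b : ι → V} (hb : LinearIndependent K b) (hbU : ∀ i, b i ∈ U)
    (hbf : ∀ i, f (b i) = 0) :
    Module.finrank K (U.map f) + Fintype.card ι ≤ Module.finrank K U := by
  set g := f.domRestrict U
  have hker : LinearIndependent K fun i => (⟨⟨b i, hbU i⟩, hbf i⟩ : LinearMap.ker g) :=
    LinearIndependent.of_comp (U.subtype ∘ₗ (LinearMap.ker g).subtype) hb
  rw [← LinearMap.range_domRestrict, ← g.finrank_range_add_finrank_ker]
  exact Nat.add_le_add_left hker.fintype_card_le_finrank _

theorem finrank_map_updateRowMinors_le [Fintype k] [DecidableEq k] {C : Matrix n k K} {j₀ : n}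
    {k₀ : k} (hC : ∀ j ≠ j₀, C j k₀ = 0) :
    Module.finrank K ((LinearMap.ker (LinearMap.proj k₀)).map (updateRowMinors C j₀)) ≤
      Fintype.card k - Fintype.card n := by
  by_cases hind : LinearIndependent K fun j : {j // j ≠ j₀} => C j
  · have hU := Module.Dual.finrank_ker_add_one_of_ne_zero
      (f := (LinearMap.proj k₀ : (k → K) →ₗ[K] K))
      (fun h => by simpa using LinearMap.congr_fun h (Pi.single k₀ 1))
    have hmap := Submodule.finrank_map_add_card_le (updateRowMinors C j₀)
      (LinearMap.ker (LinearMap.proj k₀)) hind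
      (fun j => LinearMap.mem_ker.2 (hC j j.2))
      (fun j => updateRowMinors_row_eq_zero C j.2)
    have hcard : Fintype.card {j // j ≠ j₀} + 1 = Fintype.card n := by
      rw [Fintype.card_subtype_compl, Fintype.card_subtype_eq]
      have := Fintype.card_pos_iff.2 ⟨j₀⟩
      omega
    simp only [Module.finrank_fintype_fun_eq_card] at hU
    omega
  · rw [updateRowMinors_eq_zero_of_not_linearIndependent hind, Submodule.map_zero, finrank_bot]
    exact Nat.zero_le _

theorem rank_updateRowMinors_le {ι : Type*} [Fintype ι] [Fintype k] [DecidableEq k]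
    {C : Matrix n k K} {j₀ : n} {a : ι → k → K} {k₀ : k} (hC : ∀ j ≠ j₀, C j k₀ = 0)
    (ha : ∀ i, a i k₀ = 0) :
    (of fun i => updateRowMinors C j₀ (a i)).rank ≤ Fintype.card k - Fintype.card n := by
  rw [rank_eq_finrank_span_row]
  refine (Submodule.finrank_mono ?_).trans (finrank_map_updateRowMinors_le hC)
  rw [Submodule.span_le]
  rintro _ ⟨i, rfl⟩
  exact ⟨a i, ha i, rfl⟩

theorem Matrix.rank_le_card_sub_one_of_row_eq_zero {ι m : Type*} [Fintype ι] [Fintype m]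
    {M : Matrix ι m K} {i₀ : ι} (h : M i₀ = 0) : M.rank ≤ Fintype.card ι - 1 := by
  classical
  rw [rank_eq_finrank_span_row]
  have hspan : Submodule.span K (Set.range M) ≤
      Submodule.span K (Set.range fun i : {i // i ≠ i₀} => M i) := by
    refine Submodule.span_le.2 (Set.range_subset_iff.2 fun i => ?_)
    by_cases hi : i = i₀
    · simp [hi, h]
    · exact Submodule.subset_span ⟨⟨i, hi⟩, rfl⟩
  refine (Submodule.finrank_mono hspan).trans ((finrank_range_le_card _).trans ?_)
  rw [Fintype.card_subtype_compl, Fintype.card_subtype_eq]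

end LinearAlgebra

/-- if (P,Q,T) ∈ K_A with P = Q = T = (1,0,…,0), then
a_{11k} = a_{1j1} = a_{i11} = 0, the first column of the Jacobian of 𝓛 at P
vanishes, each entry ∂_i L_α(P) equals the determinant of the q×q matrix whose
first row is (a_{i1k_1},…,a_{i1k_q}) and whose other rows are
(a_{1jk_1},…,a_{1jk_q}), and rank J_𝓛(P) ≤ min(r-q, p-1), so P is a degenerate
point of 𝓛. -/
theorem kernel_point_is_degenerate_for_L (p q r : ℕ)
    (hp : 2 ≤ p) (hpq : p ≤ q) (hqr : q ≤ r)
    (A : Fin p → Fin q → Fin r → ℂ)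
    (h1 : Matrix.vecMul (Pi.single (⟨0, by omega⟩ : Fin q) (1 : ℂ))
      (Lmat A (Pi.single (⟨0, by omega⟩ : Fin p) (1 : ℂ))) = 0)
    (h2 : Matrix.vecMul (Pi.single (⟨0, by omega⟩ : Fin p) (1 : ℂ))
      (Nmat A (Pi.single (⟨0, by omega⟩ : Fin r) (1 : ℂ))) = 0)
    (h3 : (Mmat A (Pi.single (⟨0, by omega⟩ : Fin q) (1 : ℂ))).mulVec
      (Pi.single (⟨0, by omega⟩ : Fin r) (1 : ℂ)) = 0) :
    (∀ k : Fin r, A ⟨0, by omega⟩ ⟨0, by omega⟩ k = 0) ∧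
    (∀ j : Fin q, A ⟨0, by omega⟩ j ⟨0, by omega⟩ = 0) ∧
    (∀ i : Fin p, A i ⟨0, by omega⟩ ⟨0, by omega⟩ = 0) ∧
    (∀ s : Fin q → Fin r,
      fderiv ℂ (fun x : Fin p → ℂ =>
          Matrix.det (Matrix.of fun (j m : Fin q) => ∑ i, A i j (s m) * x i))
        (Pi.single (⟨0, by omega⟩ : Fin p) (1 : ℂ))
        (Pi.single (⟨0, by omega⟩ : Fin p) (1 : ℂ)) = 0) ∧
    (∀ (i : Fin p) (s : Fin q → Fin r),
      fderiv ℂ (fun x : Fin p → ℂ =>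
          Matrix.det (Matrix.of fun (j m : Fin q) => ∑ i', A i' j (s m) * x i'))
        (Pi.single (⟨0, by omega⟩ : Fin p) (1 : ℂ))
        (Pi.single i (1 : ℂ)) =
      Matrix.det (Matrix.of fun (j m : Fin q) =>
        if j = (⟨0, by omega⟩ : Fin q) then A i ⟨0, by omega⟩ (s m)
        else A ⟨0, by omega⟩ j (s m))) ∧
    (Matrix.of fun (i : Fin p) (s : Fin q → Fin r) =>
      fderiv ℂ (fun x : Fin p → ℂ =>
          Matrix.det (Matrix.of fun (j m : Fin q) => ∑ i', A i' j (s m) * x i'))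
        (Pi.single (⟨0, by omega⟩ : Fin p) (1 : ℂ))
        (Pi.single i (1 : ℂ))).rank ≤ min (r - q) (p - 1) := by
  set i₀ : Fin p := ⟨0, by omega⟩
  set j₀ : Fin q := ⟨0, by omega⟩
  set k₀ : Fin r := ⟨0, by omega⟩
  have hA₁ : ∀ k, A i₀ j₀ k = 0 := fun k => by
    simpa [Lmat, Pi.single_apply] using congrFun h1 k
  have hA₂ : ∀ j, A i₀ j k₀ = 0 := fun j => by
    simpa [Nmat, Pi.single_apply] using congrFun h2 j
  have hA₃ : ∀ i, A i j₀ k₀ = 0 := fun i => by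
    simpa [Mmat, Pi.single_apply] using congrFun h3 i
  set slice : Fin p → Matrix (Fin q) (Fin r) ℂ := fun i => of (A i)
  have hslice : slice i₀ j₀ = 0 := funext hA₁
  have hderiv : ∀ i s, fderiv ℂ (fun x : Fin p → ℂ =>
        Matrix.det (Matrix.of fun (j m : Fin q) => ∑ i', A i' j (s m) * x i'))
        (Pi.single i₀ 1) (Pi.single i 1) = updateRowMinors (slice i₀) j₀ (slice i j₀) s :=
    fun i s => fderiv_det_pencil_single_apply (fun i => (slice i).submatrix id s)
      (funext fun m => hA₁ (s m)) i
  refine ⟨hA₁, hA₂, hA₃, fun s => ?_, fun i s => ?_, ?_⟩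
  · rw [hderiv, hslice, map_zero]
    rfl
  · rw [hderiv, updateRowMinors_apply]
    congr 1
    ext j m
    simp [updateRow_apply, slice]
  · have hJ : (of fun i s => fderiv ℂ (fun x : Fin p → ℂ =>
          Matrix.det (Matrix.of fun (j m : Fin q) => ∑ i', A i' j (s m) * x i'))
          (Pi.single i₀ 1) (Pi.single i 1)) =
        of fun i => updateRowMinors (slice i₀) j₀ (slice i j₀) :=
      Matrix.ext hderiv
    rw [hJ]
    refine le_min ?_ ?_
    · simpa using rank_updateRowMinors_le (C := slice i₀) (a := fun i => slice i j₀)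
        (fun j _ => hA₂ j) hA₃
    · simpa using rank_le_card_sub_one_of_row_eq_zero (i₀ := i₀) (by ext s; simp [hslice])
end

section
/- Let A be a p×q×r complex hypermatrix with 2 ≤ p ≤ q ≤ r and r ≥ p + q − 1 (boundary or exterior format). If the determinantal scheme 𝓛 ⊂ P^{p-1} contains a point P at which L(P) has rank exactly q−1 (a degenerate but not bi-degenerate point), then A is degenerate: there exist nonzero Q ∈ C^q and T ∈ C^r with (P,Q,T) ∈ K_A. Indeed, Q is the unique (up to scalar) left-kernel vector of L(P), and the combined linear system L(P)Z = 0, M(Q)Z = 0 in the r variables Z has at most p+q−2 ≤ r−1 nonzero equations, hence a nonzero solution T. -/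
open Matrix

lemma ident1 {p q r : ℕ} (A : Fin p → Fin q → Fin r → ℂ) (P : Fin p → ℂ) (Q : Fin q → ℂ) :
    Matrix.vecMul P (Mmat A Q) = Matrix.vecMul Q (Lmat A P) := by
  funext k
  simp only [Matrix.vecMul, dotProduct, Mmat, Lmat, Matrix.of_apply,
    Finset.mul_sum]
  rw [Finset.sum_comm]
  exact Finset.sum_congr rfl fun j _ => Finset.sum_congr rfl fun i _ => by ring

lemma ident2 {p q r : ℕ} (A : Fin p → Fin q → Fin r → ℂ) (P : Fin p → ℂ) (T : Fin r → ℂ) :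
    Matrix.vecMul P (Nmat A T) = (Lmat A P).mulVec T := by
  funext j
  simp only [Matrix.vecMul, Matrix.mulVec, dotProduct, Nmat, Lmat, Matrix.of_apply,
    Finset.mul_sum, Finset.sum_mul]
  rw [Finset.sum_comm]
  exact Finset.sum_congr rfl fun k _ => Finset.sum_congr rfl fun i _ => by ring

/-- for a non-interior format (r ≥ p+q-1), if there is a nonzero P
with rank L(P) = q-1 (a degenerate but not bi-degenerate point of 𝓛), then A is
degenerate: the left kernel of L(P) is spanned by a single nonzero Q, and there
is a nonzero T with (P,Q,T) ∈ K_A. -/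
theorem degenerate_of_nonbidegenerate_point (p q r : ℕ)
    (hp : 2 ≤ p) (hpq : p ≤ q) (hqr : q ≤ r) (hb : p + q - 1 ≤ r)
    (A : Fin p → Fin q → Fin r → ℂ)
    (P : Fin p → ℂ) (hP : P ≠ 0) (hrk : (Lmat A P).rank = q - 1) :
    ∃ Q : Fin q → ℂ, Q ≠ 0 ∧ Matrix.vecMul Q (Lmat A P) = 0 ∧
      (∀ Q' : Fin q → ℂ, Matrix.vecMul Q' (Lmat A P) = 0 → ∃ c : ℂ, Q' = c • Q) ∧
      ∃ T : Fin r → ℂ, T ≠ 0 ∧ (Lmat A P).mulVec T = 0 ∧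
        (Mmat A Q).mulVec T = 0 ∧ Matrix.vecMul P (Nmat A T) = 0 := by
  set L := Lmat A P with hL
  -- kernel of Lᵀ has dimension 1
  have hrkT : (Lᵀ).rank = q - 1 := by rw [Matrix.rank_transpose]; exact hrk
  have hrn := LinearMap.finrank_range_add_finrank_ker (Lᵀ).mulVecLin
  rw [Module.finrank_pi, Fintype.card_fin] at hrn
  have hker1 : Module.finrank ℂ (LinearMap.ker (Lᵀ).mulVecLin) = 1 := by
    have : (Lᵀ).rank = Module.finrank ℂ (LinearMap.range (Lᵀ).mulVecLin) := rfl
    omega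
  obtain ⟨v, hv0, hvspan⟩ := (finrank_eq_one_iff' ).mp hker1
  set Q : Fin q → ℂ := (v : Fin q → ℂ) with hQ
  have hQ0 : Q ≠ 0 := by
    intro h
    apply hv0
    exact Subtype.ext h
  have hmem : ∀ w : Fin q → ℂ, Matrix.vecMul w L = 0 ↔ w ∈ LinearMap.ker (Lᵀ).mulVecLin := by
    intro w
    rw [LinearMap.mem_ker, Matrix.mulVecLin_apply, Matrix.mulVec_transpose]
  have hQker : Matrix.vecMul Q L = 0 := (hmem Q).mpr v.2
  refine ⟨Q, hQ0, hQker, ?_, ?_⟩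
  · intro Q' hQ'
    obtain ⟨c, hc⟩ := hvspan ⟨Q', (hmem Q').mp hQ'⟩
    exact ⟨c, by simpa [hQ] using congrArg Subtype.val hc.symm⟩
  · -- existence of T
    set M := Mmat A Q with hM
    -- rank M ≤ p - 1
    have hPM : Matrix.vecMul P M = 0 := by rw [hM, ident1, ← hL, hQker]
    have hPker : P ∈ LinearMap.ker (Mᵀ).mulVecLin := by
      rw [LinearMap.mem_ker, Matrix.mulVecLin_apply, Matrix.mulVec_transpose]
      exact hPM
    have hMkerpos : 1 ≤ Module.finrank ℂ (LinearMap.ker (Mᵀ).mulVecLin) := by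
      rw [Nat.one_le_iff_ne_zero]
      intro h
      have hbot : LinearMap.ker (Mᵀ).mulVecLin = ⊥ :=
        Submodule.finrank_eq_zero.mp h
      rw [hbot, Submodule.mem_bot] at hPker
      exact hP hPker
    have hrnM := LinearMap.finrank_range_add_finrank_ker (Mᵀ).mulVecLin
    rw [Module.finrank_pi, Fintype.card_fin] at hrnM
    have hMrank : M.rank ≤ p - 1 := by
      have h1 : (Mᵀ).rank = Module.finrank ℂ (LinearMap.range (Mᵀ).mulVecLin) := rfl
      have h2 : (Mᵀ).rank = M.rank := Matrix.rank_transpose M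
      omega
    -- kernels of L and M as maps on (Fin r → ℂ)
    have hrnL2 := LinearMap.finrank_range_add_finrank_ker L.mulVecLin
    rw [Module.finrank_pi, Fintype.card_fin] at hrnL2
    have hrnM2 := LinearMap.finrank_range_add_finrank_ker M.mulVecLin
    rw [Module.finrank_pi, Fintype.card_fin] at hrnM2
    have hLrange : Module.finrank ℂ (LinearMap.range L.mulVecLin) = q - 1 := hrk
    have hMrange : Module.finrank ℂ (LinearMap.range M.mulVecLin) ≤ p - 1 := hMrank
    set K₁ := LinearMap.ker L.mulVecLin
    set K₂ := LinearMap.ker M.mulVecLin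
    have hsup := Submodule.finrank_sup_add_finrank_inf_eq K₁ K₂
    have hsuple : Module.finrank ℂ ↥(K₁ ⊔ K₂) ≤ r := by
      have := Submodule.finrank_le (K₁ ⊔ K₂)
      rwa [Module.finrank_pi, Fintype.card_fin] at this
    have hkerpos : 0 < Module.finrank ℂ ↥(K₁ ⊓ K₂) := by omega
    have hne : K₁ ⊓ K₂ ≠ ⊥ := by
      intro h
      rw [h] at hkerpos
      simp at hkerpos
    obtain ⟨T, hTmem, hT0⟩ := Submodule.exists_mem_ne_zero_of_ne_bot hne
    have hLT : L.mulVec T = 0 := hTmem.1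
    have hMT : M.mulVec T = 0 := hTmem.2
    exact ⟨T, hT0, hLT, hMT, by rw [ident2, ← hL, hLT]⟩
end

section
/- Every complex 2×2×2 hypermatrix can be reduced, by invertible linear changes of coordinates in the three factors, to exactly one of the four canonical forms whose trilinear polynomials are: (I) x_1 y_1 z_1; (II) x_1 y_1 z_1 + x_2 y_2 z_1 (up to permuting the roles of the three factors); (III) x_1 y_1 z_2 + x_1 y_2 z_1 + x_2 y_1 z_1; (IV) x_1 y_1 z_1 + x_2 y_2 z_2. These have tensor rank 1, 2, 3, 2 respectively. -/
/-- Equivalence of 2×2×2 hypermatrices under invertible linear changes of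
coordinates in the three factors. -/
def TensorEquiv (A B : Fin 2 → Fin 2 → Fin 2 → ℂ) : Prop :=
  ∃ C D E : Matrix (Fin 2) (Fin 2) ℂ,
    IsUnit C.det ∧ IsUnit D.det ∧ IsUnit E.det ∧
    ∀ i j k, B i j k = ∑ i', ∑ j', ∑ k', C i' i * D j' j * E k' k * A i' j' k'

/-- Tensor rank: minimal length of a decomposition into decomposable tensors. -/
noncomputable def Trk (A : Fin 2 → Fin 2 → Fin 2 → ℂ) : ℕ :=
  sInf {n : ℕ | ∃ u v w : Fin n → Fin 2 → ℂ,
    ∀ i j k, A i j k = ∑ m, u m i * v m j * w m k}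

/-- Canonical form I: x₁y₁z₁. -/
noncomputable def T1 : Fin 2 → Fin 2 → Fin 2 → ℂ := fun i j k =>
  if i = 0 ∧ j = 0 ∧ k = 0 then 1 else 0

/-- Canonical form II with the x-factor in the special role: x₁y₁z₁ + x₁y₂z₂. -/
noncomputable def T2x : Fin 2 → Fin 2 → Fin 2 → ℂ := fun i j k =>
  if i = 0 ∧ j = k then 1 else 0

/-- Canonical form II with the y-factor in the special role: x₁y₁z₁ + x₂y₁z₂. -/
noncomputable def T2y : Fin 2 → Fin 2 → Fin 2 → ℂ := fun i j k =>
  if j = 0 ∧ i = k then 1 else 0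

/-- Canonical form II: x₁y₁z₁ + x₂y₂z₁. -/
noncomputable def T2z : Fin 2 → Fin 2 → Fin 2 → ℂ := fun i j k =>
  if k = 0 ∧ i = j then 1 else 0

/-- Canonical form III: x₁y₁z₂ + x₁y₂z₁ + x₂y₁z₁. -/
noncomputable def T3 : Fin 2 → Fin 2 → Fin 2 → ℂ := fun i j k =>
  if (i = 0 ∧ j = 0 ∧ k = 1) ∨ (i = 0 ∧ j = 1 ∧ k = 0) ∨ (i = 1 ∧ j = 0 ∧ k = 0)
  then 1 else 0

/-- Canonical form IV: x₁y₁z₁ + x₂y₂z₂. -/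
noncomputable def T4 : Fin 2 → Fin 2 → Fin 2 → ℂ := fun i j k =>
  if i = j ∧ j = k then 1 else 0

/-!
A hypermatrix is a pencil `s M + t N` of 2 × 2 matrices, its slices along the third factor; the
group acts by `(M, N) ↦ (P M Q, P N Q)` and by invertible recombinations of `M` and `N`. If the
slices are dependent, one of them can be made zero and the other has rank 1 or 2 (forms I and II).
If every matrix of the pencil is singular, writing `M = u vᵀ`, `N = u' v'ᵀ` gives
`det (M + N) = det [u u'] * det [v v']`, so the slices share a left or a right kernel vector: the
hypermatrix is degenerate in the first or second factor, and the previous case applies after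
permuting the factors. Otherwise the pencil contains an invertible matrix and becomes `(1, X)` with
`X` not scalar; subtracting an eigenvalue and passing to the companion matrix leaves
`!![0, 0; 1, p]`, which gives III for `p = 0` and IV for `p ≠ 0`.

The six forms are told apart by tensor rank and by the factors in which they are degenerate. For a
sum `u ⊗ v ⊗ w + u' ⊗ v' ⊗ w'` the pencil determinant is a constant times the product of the linear
forms `s w₀ + t w₁` and `s w'₀ + t w'₁`; for III it is `-s²`, which forces `w₁ = w'₁ = 0`, i.e. a
zero second slice. So III has rank 3.
-/

open Matrix

abbrev Hypermatrix := Fin 2 → Fin 2 → Fin 2 → ℂ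

section MatrixLemmas

variable {K : Type*} [Field K]

theorem Matrix.exists_eq_vecMulVec_of_det_eq_zero {M : Matrix (Fin 2) (Fin 2) K}
    (hM : M.det = 0) : ∃ u v : Fin 2 → K, M = vecMulVec u v := by
  obtain ⟨b, hb0, hb⟩ := exists_mulVec_eq_zero_iff.mpr hM
  have hrow : ∀ i, M i 0 * b 0 + M i 1 * b 1 = 0 := fun i => by
    simpa [mulVec, dotProduct, Fin.sum_univ_two] using congrFun hb i
  by_cases h0 : b 0 = 0
  · have h1 : b 1 ≠ 0 := fun h1 => hb0 (funext fun i => by fin_cases i <;> assumption)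
    refine ⟨fun i => M i 0, ![1, 0], ?_⟩
    ext i j
    have := hrow i
    fin_cases j <;> simp_all
  · refine ⟨fun i => M i 1 / b 0, ![-b 1, b 0], ?_⟩
    ext i j
    fin_cases j <;> simp [vecMulVec_apply]
    · field_simp; linear_combination hrow i
    · field_simp

theorem Matrix.exists_isUnit_det_mulVec_single_eq {u : Fin 2 → K} (hu : u ≠ 0) :
    ∃ S : Matrix (Fin 2) (Fin 2) K, IsUnit S.det ∧ S *ᵥ Pi.single 0 1 = u := by
  by_cases h0 : u 0 = 0
  · have h1 : u 1 ≠ 0 := fun h1 => hu (funext fun i => by fin_cases i <;> assumption)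
    refine ⟨!![u 0, 1; u 1, 0], by simp [det_fin_two_of, h1], ?_⟩
    ext i; fin_cases i <;> simp [mulVec, dotProduct, Fin.sum_univ_two]
  · refine ⟨!![u 0, 0; u 1, 1], by simp [det_fin_two_of, h0], ?_⟩
    ext i; fin_cases i <;> simp [mulVec, dotProduct, Fin.sum_univ_two]

theorem Matrix.exists_det_sub_smul_one_eq_zero {n : Type*} [Fintype n] [DecidableEq n]
    [Nonempty n] [IsAlgClosed K] (X : Matrix n n K) : ∃ c : K, (X - c • 1).det = 0 := by
  obtain ⟨c, hc⟩ := IsAlgClosed.exists_root X.charpoly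
    (by rw [charpoly_degree_eq_dim]; exact_mod_cast Fintype.card_ne_zero)
  rw [Polynomial.IsRoot, eval_charpoly, scalar_apply, ← smul_one_eq_diagonal] at hc
  exact ⟨c, by rw [← neg_sub, det_neg, hc, mul_zero]⟩

/-- The columns of `S` are a cyclic vector `x` of `X` and `X *ᵥ x`. -/
theorem Matrix.exists_mul_eq_mul_companion {X : Matrix (Fin 2) (Fin 2) K}
    (hX : ∀ c : K, X ≠ c • 1) :
    ∃ S : Matrix (Fin 2) (Fin 2) K, IsUnit S.det ∧ X * S = S * !![0, -X.det; 1, X.trace] := by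
  by_cases h10 : X 1 0 = 0
  · by_cases h01 : X 0 1 = 0
    · have hd : X 1 1 - X 0 0 ≠ 0 := fun hd => hX (X 0 0) <| by
        ext i j; fin_cases i <;> fin_cases j <;> simp [h01, h10]; linear_combination hd
      refine ⟨!![1, X 0 0; 1, X 1 1], by simpa [det_fin_two_of] using hd, ?_⟩
      ext i j
      fin_cases i <;> fin_cases j <;>
        simp [mul_apply, Fin.sum_univ_two, det_fin_two, trace_fin_two, h01, h10] <;> ring
    · refine ⟨!![0, X 0 1; 1, X 1 1], by simpa [det_fin_two_of] using h01, ?_⟩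
      ext i j
      fin_cases i <;> fin_cases j <;>
        simp [mul_apply, Fin.sum_univ_two, det_fin_two, trace_fin_two, h10] <;> ring
  · refine ⟨!![1, X 0 0; 0, X 1 0], by simpa [det_fin_two_of] using h10, ?_⟩
    ext i j
    fin_cases i <;> fin_cases j <;>
      simp [mul_apply, Fin.sum_univ_two, det_fin_two, trace_fin_two] <;> ring

end MatrixLemmas

section Action

variable {A B : Hypermatrix} {C D E : Matrix (Fin 2) (Fin 2) ℂ}

def act (C D E : Matrix (Fin 2) (Fin 2) ℂ) (A : Hypermatrix) : Hypermatrix :=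
  fun i j k => ∑ i', ∑ j', ∑ k', C i' i * D j' j * E k' k * A i' j' k'

theorem tensorEquiv_iff_act : TensorEquiv A B ↔
    ∃ C D E : Matrix (Fin 2) (Fin 2) ℂ,
      IsUnit C.det ∧ IsUnit D.det ∧ IsUnit E.det ∧ B = act C D E A := by
  simp only [TensorEquiv, act, funext_iff]

theorem tensorEquiv_act (hC : IsUnit C.det) (hD : IsUnit D.det) (hE : IsUnit E.det) :
    TensorEquiv A (act C D E A) :=
  tensorEquiv_iff_act.mpr ⟨C, D, E, hC, hD, hE, rfl⟩

theorem act_one (A : Hypermatrix) : act 1 1 1 A = A := by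
  funext i j k
  simp [act, one_apply]

theorem act_act (C D E C' D' E' : Matrix (Fin 2) (Fin 2) ℂ) (A : Hypermatrix) :
    act C D E (act C' D' E' A) = act (C' * C) (D' * D) (E' * E) A := by
  funext i j k
  simp only [act, Fin.sum_univ_two, mul_apply]
  ring

theorem TensorEquiv.refl (A : Hypermatrix) : TensorEquiv A A := by
  simpa only [act_one] using
    tensorEquiv_act (A := A) (C := 1) (D := 1) (E := 1) (by simp) (by simp) (by simp)

theorem TensorEquiv.of_eq (h : A = B) : TensorEquiv A B := h ▸ .refl A

theorem TensorEquiv.symm (h : TensorEquiv A B) : TensorEquiv B A := by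
  obtain ⟨C, D, E, hC, hD, hE, rfl⟩ := tensorEquiv_iff_act.mp h
  have key := tensorEquiv_act (A := act C D E A) (isUnit_nonsing_inv_det C hC)
    (isUnit_nonsing_inv_det D hD) (isUnit_nonsing_inv_det E hE)
  rwa [act_act, mul_nonsing_inv _ hC, mul_nonsing_inv _ hD, mul_nonsing_inv _ hE,
    act_one] at key

theorem TensorEquiv.trans {A' : Hypermatrix} (h : TensorEquiv A B) (h' : TensorEquiv B A') :
    TensorEquiv A A' := by
  obtain ⟨C, D, E, hC, hD, hE, rfl⟩ := tensorEquiv_iff_act.mp h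
  obtain ⟨C', D', E', hC', hD', hE', rfl⟩ := tensorEquiv_iff_act.mp h'
  rw [act_act]
  exact tensorEquiv_act (by rw [det_mul]; exact hC.mul hC') (by rw [det_mul]; exact hD.mul hD')
    (by rw [det_mul]; exact hE.mul hE')

theorem TensorEquiv.eq_zero (h : TensorEquiv A 0) : A = 0 := by
  obtain ⟨C, D, E, -, -, -, rfl⟩ := tensorEquiv_iff_act.mp h.symm
  funext i j k
  simp [act]

end Action

section Slices

variable {M N : Matrix (Fin 2) (Fin 2) ℂ}

def ofSlices (M N : Matrix (Fin 2) (Fin 2) ℂ) : Hypermatrix := fun i j k => ![M, N] k i j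

theorem ofSlices_slices (A : Hypermatrix) :
    ofSlices (of fun i j => A i j 0) (of fun i j => A i j 1) = A := by
  funext i j k
  fin_cases k <;> rfl

theorem act_ofSlices (C D E M N : Matrix (Fin 2) (Fin 2) ℂ) :
    act C D E (ofSlices M N) =
      ofSlices (E 0 0 • (Cᵀ * M * D) + E 1 0 • (Cᵀ * N * D))
        (E 0 1 • (Cᵀ * M * D) + E 1 1 • (Cᵀ * N * D)) := by
  funext i j k
  fin_cases k <;>
    simp [act, ofSlices, Fin.sum_univ_two, mul_apply] <;> ring

theorem tensorEquiv_ofSlices_mul {P Q : Matrix (Fin 2) (Fin 2) ℂ} (hP : IsUnit P.det)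
    (hQ : IsUnit Q.det) : TensorEquiv (ofSlices M N) (ofSlices (P * M * Q) (P * N * Q)) := by
  simpa [act_ofSlices] using
    tensorEquiv_act (A := ofSlices M N) (C := Pᵀ) (E := 1) (by rwa [det_transpose]) hQ (by simp)

theorem tensorEquiv_ofSlices_smul_add {a b c d : ℂ} (h : a * d - b * c ≠ 0) :
    TensorEquiv (ofSlices M N) (ofSlices (a • M + b • N) (c • M + d • N)) := by
  simpa [act_ofSlices] using
    tensorEquiv_act (A := ofSlices M N) (C := 1) (D := 1) (E := !![a, c; b, d]) (by simp)
      (by simp) (by simpa [det_fin_two_of, mul_comm c b] using h)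

theorem tensorEquiv_ofSlices_one_of_mul_eq {X Y S : Matrix (Fin 2) (Fin 2) ℂ}
    (hS : IsUnit S.det) (h : X * S = S * Y) : TensorEquiv (ofSlices 1 X) (ofSlices 1 Y) := by
  have key := tensorEquiv_ofSlices_mul (M := 1) (N := X) (isUnit_nonsing_inv_det S hS) hS
  rwa [mul_one, nonsing_inv_mul _ hS, mul_assoc, h, ← mul_assoc, nonsing_inv_mul _ hS,
    one_mul] at key

end Slices

section Swaps

variable {A B : Hypermatrix}

def swapXZ (A : Hypermatrix) : Hypermatrix := fun i j k => A k j i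

def swapYZ (A : Hypermatrix) : Hypermatrix := fun i j k => A i k j

@[simp]
theorem swapXZ_swapXZ (A : Hypermatrix) : swapXZ (swapXZ A) = A := rfl

@[simp]
theorem swapYZ_swapYZ (A : Hypermatrix) : swapYZ (swapYZ A) = A := rfl

theorem swapXZ_act (C D E : Matrix (Fin 2) (Fin 2) ℂ) (A : Hypermatrix) :
    swapXZ (act C D E A) = act E D C (swapXZ A) := by
  funext i j k
  simp only [swapXZ, act, Fin.sum_univ_two]
  ring

theorem swapYZ_act (C D E : Matrix (Fin 2) (Fin 2) ℂ) (A : Hypermatrix) :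
    swapYZ (act C D E A) = act C E D (swapYZ A) := by
  funext i j k
  simp only [swapYZ, act, Fin.sum_univ_two]
  ring

theorem TensorEquiv.swapXZ (h : TensorEquiv A B) : TensorEquiv (swapXZ A) (swapXZ B) := by
  obtain ⟨C, D, E, hC, hD, hE, rfl⟩ := tensorEquiv_iff_act.mp h
  rw [swapXZ_act]
  exact tensorEquiv_act hE hD hC

theorem TensorEquiv.swapYZ (h : TensorEquiv A B) : TensorEquiv (swapYZ A) (swapYZ B) := by
  obtain ⟨C, D, E, hC, hD, hE, rfl⟩ := tensorEquiv_iff_act.mp h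
  rw [swapYZ_act]
  exact tensorEquiv_act hC hE hD

theorem swapXZ_T1 : swapXZ T1 = T1 := by
  funext i j k; fin_cases i <;> fin_cases j <;> fin_cases k <;> rfl

theorem swapYZ_T1 : swapYZ T1 = T1 := by
  funext i j k; fin_cases i <;> fin_cases j <;> fin_cases k <;> rfl

theorem swapXZ_T2z : swapXZ T2z = T2x := by
  funext i j k; fin_cases i <;> fin_cases j <;> fin_cases k <;> rfl

theorem swapXZ_T2x : swapXZ T2x = T2z := by
  rw [← swapXZ_T2z, swapXZ_swapXZ]

theorem swapXZ_T2y : swapXZ T2y = T2y := by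
  funext i j k; fin_cases i <;> fin_cases j <;> fin_cases k <;> rfl

theorem swapYZ_T2z : swapYZ T2z = T2y := by
  funext i j k; fin_cases i <;> fin_cases j <;> fin_cases k <;> rfl

theorem swapYZ_T2y : swapYZ T2y = T2z := by
  rw [← swapYZ_T2z, swapYZ_swapYZ]

theorem swapXZ_T4 : swapXZ T4 = T4 := by
  funext i j k; fin_cases i <;> fin_cases j <;> fin_cases k <;> rfl

theorem swapYZ_T4 : swapYZ T4 = T4 := by
  funext i j k; fin_cases i <;> fin_cases j <;> fin_cases k <;> rfl

end Swaps

section Degenerate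

variable {A B : Hypermatrix}

/-- Degeneracy in the first and second factor is `IsZDegenerate (swapXZ A)` and
`IsZDegenerate (swapYZ A)`. -/
def IsZDegenerate (A : Hypermatrix) : Prop :=
  ∃ w : Fin 2 → ℂ, w ≠ 0 ∧ ∀ i j, ∑ k, A i j k * w k = 0

theorem TensorEquiv.isZDegenerate (h : TensorEquiv A B) (hA : IsZDegenerate A) :
    IsZDegenerate B := by
  obtain ⟨C, D, E, -, -, hE, rfl⟩ := tensorEquiv_iff_act.mp h
  obtain ⟨w, hw, hAw⟩ := hA
  have hEw : E *ᵥ (E⁻¹ *ᵥ w) = w := by rw [mulVec_mulVec, mul_nonsing_inv _ hE, one_mulVec]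
  refine ⟨E⁻¹ *ᵥ w, fun h0 => hw (by rw [← hEw, h0, mulVec_zero]), fun i j => ?_⟩
  set w' := E⁻¹ *ᵥ w
  have hw' : ∀ k', w k' = E k' 0 * w' 0 + E k' 1 * w' 1 := fun k' => by
    rw [← hEw]; simp [mulVec, dotProduct, Fin.sum_univ_two]
  simp only [Fin.sum_univ_two, hw'] at hAw
  simp only [act, Fin.sum_univ_two]
  linear_combination C 0 i * D 0 j * hAw 0 0 + C 0 i * D 1 j * hAw 0 1 +
    C 1 i * D 0 j * hAw 1 0 + C 1 i * D 1 j * hAw 1 1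

theorem TensorEquiv.isZDegenerate_iff (h : TensorEquiv A B) :
    IsZDegenerate A ↔ IsZDegenerate B :=
  ⟨h.isZDegenerate, h.symm.isZDegenerate⟩

theorem isZDegenerate_T2z : IsZDegenerate T2z :=
  ⟨![0, 1], by simp, fun i j => by simp [T2z]⟩

theorem not_isZDegenerate_T2x : ¬ IsZDegenerate T2x := by
  rintro ⟨w, hw, h⟩
  refine hw (funext fun k => ?_)
  fin_cases k
  · simpa [T2x] using h 0 0
  · simpa [T2x] using h 0 1

theorem not_isZDegenerate_T2y : ¬ IsZDegenerate T2y := by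
  rintro ⟨w, hw, h⟩
  refine hw (funext fun k => ?_)
  fin_cases k
  · simpa [T2y] using h 0 0
  · simpa [T2y] using h 1 0

theorem not_isZDegenerate_T4 : ¬ IsZDegenerate T4 := by
  rintro ⟨w, hw, h⟩
  refine hw (funext fun k => ?_)
  fin_cases k
  · simpa [T4] using h 0 0
  · simpa [T4] using h 1 1

end Degenerate

section Rank

variable {A B : Hypermatrix} {n : ℕ}

/-- `Trk A` is by definition `sInf {n | HasDecomp A n}`. -/
def HasDecomp (A : Hypermatrix) (n : ℕ) : Prop :=
  ∃ u v w : Fin n → Fin 2 → ℂ, ∀ i j k, A i j k = ∑ m, u m i * v m j * w m k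

theorem HasDecomp.succ (h : HasDecomp A n) : HasDecomp A (n + 1) := by
  obtain ⟨u, v, w, h⟩ := h
  refine ⟨Fin.snoc u 0, Fin.snoc v 0, Fin.snoc w 0, fun i j k => ?_⟩
  simp [h, Fin.sum_univ_castSucc]

theorem HasDecomp.mono {m : ℕ} (h : HasDecomp A m) (hmn : m ≤ n) : HasDecomp A n := by
  induction n, hmn using Nat.le_induction with
  | base => exact h
  | succ n _ ih => exact ih.succ

theorem trk_eq_succ {r : ℕ} (h : HasDecomp A (r + 1)) (h' : ¬ HasDecomp A r) :
    Trk A = r + 1 :=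
  le_antisymm (Nat.sInf_le h) <| le_csInf ⟨_, h⟩ fun _ hm =>
    Nat.succ_le_of_lt <| lt_of_not_ge fun hle => h' (HasDecomp.mono hm hle)

theorem HasDecomp.of_tensorEquiv (h : HasDecomp A n) (e : TensorEquiv A B) : HasDecomp B n := by
  obtain ⟨C, D, E, -, -, -, rfl⟩ := tensorEquiv_iff_act.mp e
  obtain ⟨u, v, w, h⟩ := h
  refine ⟨fun m => u m ᵥ* C, fun m => v m ᵥ* D, fun m => w m ᵥ* E, fun i j k => ?_⟩
  simp only [act, h, vecMul, dotProduct, Fin.sum_univ_two, Finset.mul_sum,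
    ← Finset.sum_add_distrib]
  exact Finset.sum_congr rfl fun m _ => by ring

theorem TensorEquiv.trk_eq (e : TensorEquiv A B) : Trk A = Trk B :=
  congrArg sInf <| Set.ext fun _ => ⟨fun h => HasDecomp.of_tensorEquiv h e,
    fun h => HasDecomp.of_tensorEquiv h e.symm⟩

theorem HasDecomp.swapXZ (h : HasDecomp A n) : HasDecomp (swapXZ A) n := by
  obtain ⟨u, v, w, h⟩ := h
  refine ⟨w, v, u, fun i j k => ?_⟩
  rw [_root_.swapXZ, h]
  exact Finset.sum_congr rfl fun m _ => by ring

theorem HasDecomp.swapYZ (h : HasDecomp A n) : HasDecomp (swapYZ A) n := by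
  obtain ⟨u, v, w, h⟩ := h
  refine ⟨u, w, v, fun i j k => ?_⟩
  rw [_root_.swapYZ, h]
  exact Finset.sum_congr rfl fun m _ => by ring

theorem trk_swapXZ (A : Hypermatrix) : Trk (swapXZ A) = Trk A :=
  congrArg sInf <| Set.ext fun _ =>
    ⟨fun h => swapXZ_swapXZ A ▸ HasDecomp.swapXZ (A := swapXZ A) h, HasDecomp.swapXZ⟩

theorem trk_swapYZ (A : Hypermatrix) : Trk (swapYZ A) = Trk A :=
  congrArg sInf <| Set.ext fun _ =>
    ⟨fun h => swapYZ_swapYZ A ▸ HasDecomp.swapYZ (A := swapYZ A) h, HasDecomp.swapYZ⟩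

theorem HasDecomp.mul_eq_mul_of_one (h : HasDecomp A 1) (i j k i' j' k' : Fin 2) :
    A i j k * A i' j' k' = A i' j k * A i j' k' := by
  obtain ⟨u, v, w, h⟩ := h
  simp only [h, Fin.sum_univ_one]
  ring

theorem det_pencil_of_eq_sum {u v w : Fin 2 → Fin 2 → ℂ}
    (h : ∀ i j k, A i j k = ∑ m, u m i * v m j * w m k) (s t : ℂ) :
    (of fun i j => s * A i j 0 + t * A i j 1).det =
      (of u).det * (of v).det * ((s * w 0 0 + t * w 0 1) * (s * w 1 0 + t * w 1 1)) := by
  simp only [det_fin_two, of_apply, h, Fin.sum_univ_two]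
  ring

theorem trk_T1 : Trk T1 = 1 := by
  refine trk_eq_succ ⟨fun _ => Pi.single 0 1, fun _ => Pi.single 0 1, fun _ => Pi.single 0 1,
    fun i j k => ?_⟩ fun ⟨u, v, w, h⟩ => by simpa [T1] using h 0 0 0
  fin_cases i <;> fin_cases j <;> fin_cases k <;> simp [T1]

theorem trk_T2z : Trk T2z = 2 := by
  refine trk_eq_succ ⟨fun m => Pi.single m 1, fun m => Pi.single m 1, fun _ => Pi.single 0 1,
    fun i j k => ?_⟩ fun h => by simpa [T2z] using h.mul_eq_mul_of_one 0 0 0 1 1 0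
  fin_cases i <;> fin_cases j <;> fin_cases k <;> simp [T2z]

theorem trk_T2x : Trk T2x = 2 := by
  rw [← swapXZ_T2z, trk_swapXZ, trk_T2z]

theorem trk_T2y : Trk T2y = 2 := by
  rw [← swapYZ_T2z, trk_swapYZ, trk_T2z]

theorem trk_T4 : Trk T4 = 2 := by
  refine trk_eq_succ ⟨fun m => Pi.single m 1, fun m => Pi.single m 1, fun m => Pi.single m 1,
    fun i j k => ?_⟩ fun h => by simpa [T4] using h.mul_eq_mul_of_one 0 0 0 1 1 1
  fin_cases i <;> fin_cases j <;> fin_cases k <;> simp [T4]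

theorem not_hasDecomp_T3_two : ¬ HasDecomp T3 2 := by
  rintro ⟨u, v, w, h⟩
  obtain ⟨D, hDuv⟩ : ∃ D, (of u).det * (of v).det = D := ⟨_, rfl⟩
  have pencil := fun s t => hDuv ▸ det_pencil_of_eq_sum h s t
  -- the pencil determinant of `T3` is `-s ^ 2`; evaluate it at `(1, 0)`, `(0, 1)` and `(1, 1)`
  have h10 : D * (w 0 0 * w 1 0) = -1 := by simpa [det_fin_two, T3] using (pencil 1 0).symm
  have h01 : D * (w 0 1 * w 1 1) = 0 := by simpa [det_fin_two, T3] using (pencil 0 1).symm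
  have h11 : D * ((w 0 0 + w 0 1) * (w 1 0 + w 1 1)) = -1 := by
    simpa [det_fin_two, T3] using (pencil 1 1).symm
  obtain ⟨hD, hw00, hw10⟩ : D ≠ 0 ∧ w 0 0 ≠ 0 ∧ w 1 0 ≠ 0 := by
    have : D * (w 0 0 * w 1 0) ≠ 0 := by rw [h10]; norm_num
    simpa [not_or] using this
  have hsum : D * w 0 0 * w 1 1 + D * w 0 1 * w 1 0 = 0 := by
    linear_combination h11 - h10 - h01
  have hsq : (D * w 0 0 * w 1 1) ^ 2 = 0 := by
    linear_combination (D * w 0 0 * w 1 1) * hsum - (D * (w 0 0 * w 1 0)) * h01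
  have hw11 : w 1 1 = 0 := by simpa [hD, hw00] using hsq
  have hw01 : w 0 1 = 0 := by simpa [hw11, hD, hw10] using hsum
  simpa [T3, hw01, hw11] using h 0 0 1

theorem trk_T3 : Trk T3 = 3 := by
  refine trk_eq_succ ⟨![Pi.single 0 1, Pi.single 0 1, Pi.single 1 1],
    ![Pi.single 0 1, Pi.single 1 1, Pi.single 0 1],
    ![Pi.single 1 1, Pi.single 0 1, Pi.single 0 1], fun i j k => ?_⟩ not_hasDecomp_T3_two
  fin_cases i <;> fin_cases j <;> fin_cases k <;> simp [T3, Fin.sum_univ_three]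

end Rank

def canonicalForms : Set Hypermatrix := {T1, T2x, T2y, T2z, T3, T4}

theorem eq_of_tensorEquiv_of_mem_canonicalForms {T T' : Hypermatrix} (hT : T ∈ canonicalForms)
    (hT' : T' ∈ canonicalForms) (h : TensorEquiv T T') : T = T' := by
  have hrk := h.trk_eq
  have hx := h.swapXZ.isZDegenerate_iff
  have hy := h.swapYZ.isZDegenerate_iff
  have hz := h.isZDegenerate_iff
  simp only [canonicalForms, Set.mem_insert_iff, Set.mem_singleton_iff] at hT hT'
  rcases hT with rfl | rfl | rfl | rfl | rfl | rfl <;>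
    rcases hT' with rfl | rfl | rfl | rfl | rfl | rfl <;>
    simp_all [trk_T1, trk_T2x, trk_T2y, trk_T2z, trk_T3, trk_T4, swapXZ_T2x, swapXZ_T2y,
      swapXZ_T2z, swapXZ_T4, swapYZ_T2y, swapYZ_T2z, swapYZ_T4, isZDegenerate_T2z,
      not_isZDegenerate_T2x, not_isZDegenerate_T2y, not_isZDegenerate_T4]

section Existence

variable {A : Hypermatrix} {M N X : Matrix (Fin 2) (Fin 2) ℂ}

theorem ofSlices_vecMulVec_tensorEquiv_T1 {u v : Fin 2 → ℂ} (hu : u ≠ 0) (hv : v ≠ 0) :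
    TensorEquiv (ofSlices (vecMulVec u v) 0) T1 := by
  obtain ⟨S, hS, hSu⟩ := exists_isUnit_det_mulVec_single_eq hu
  obtain ⟨R, hR, hRv⟩ := exists_isUnit_det_mulVec_single_eq hv
  have key := tensorEquiv_ofSlices_mul (M := vecMulVec (Pi.single 0 1) (Pi.single 0 1)) (N := 0)
    hS (by rwa [det_transpose] : IsUnit Rᵀ.det)
  rw [mul_vecMulVec, vecMulVec_mul, vecMul_transpose, hSu, hRv, mul_zero, zero_mul] at key
  refine key.symm.trans (.of_eq ?_)
  funext i j k
  fin_cases i <;> fin_cases j <;> fin_cases k <;> simp [ofSlices, T1, vecMulVec_apply]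

theorem exists_tensorEquiv_ofSlices_zero {w : Fin 2 → ℂ} (hw : w ≠ 0)
    (h : w 0 • M + w 1 • N = 0) : ∃ K, TensorEquiv (ofSlices M N) (ofSlices K 0) := by
  by_cases h1 : w 1 = 0
  · have h0 : w 0 ≠ 0 := fun h0 => hw (funext fun k => by fin_cases k <;> assumption)
    have key := tensorEquiv_ofSlices_smul_add (M := M) (N := N) (a := 0) (b := 1) (c := w 0)
      (d := w 1) (by simpa using h0)
    exact ⟨N, by simpa [h] using key⟩
  · have key := tensorEquiv_ofSlices_smul_add (M := M) (N := N) (a := 1) (b := 0) (c := w 0)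
      (d := w 1) (by simpa using h1)
    exact ⟨M, by simpa [h] using key⟩

theorem tensorEquiv_T1_or_T2z_of_isZDegenerate (hA : A ≠ 0) (hz : IsZDegenerate A) :
    TensorEquiv A T1 ∨ TensorEquiv A T2z := by
  obtain ⟨w, hw, hAw⟩ := hz
  obtain ⟨K, hK⟩ := ofSlices_slices A ▸ exists_tensorEquiv_ofSlices_zero hw
    (M := of fun i j => A i j 0) (N := of fun i j => A i j 1)
    (by ext i j; simpa [Fin.sum_univ_two, mul_comm] using hAw i j)
  have hK0 : K ≠ 0 := by
    rintro rfl
    exact hA (hK.trans (.of_eq (by funext i j k; fin_cases k <;> rfl))).eq_zero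
  by_cases hdet : K.det = 0
  · obtain ⟨u, v, rfl⟩ := exists_eq_vecMulVec_of_det_eq_zero hdet
    obtain ⟨hu, hv⟩ : u ≠ 0 ∧ v ≠ 0 := by simpa [not_or] using hK0
    exact .inl (hK.trans (ofSlices_vecMulVec_tensorEquiv_T1 hu hv))
  · have hK' : IsUnit K.det := isUnit_iff_ne_zero.mpr hdet
    have key := tensorEquiv_ofSlices_mul (M := K) (N := 0) (Q := 1)
      (isUnit_nonsing_inv_det K hK') (by simp)
    rw [nonsing_inv_mul _ hK', mul_zero, zero_mul, one_mul] at key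
    refine .inr (hK.trans (key.trans (.of_eq ?_)))
    funext i j k
    fin_cases i <;> fin_cases j <;> fin_cases k <;> simp [ofSlices, T2z]

theorem isZDegenerate_swap_ofSlices_of_det_eq_zero (hM : M.det = 0) (hN : N.det = 0)
    (hMN : (M + N).det = 0) :
    IsZDegenerate (swapXZ (ofSlices M N)) ∨ IsZDegenerate (swapYZ (ofSlices M N)) := by
  obtain ⟨u, v, rfl⟩ := exists_eq_vecMulVec_of_det_eq_zero hM
  obtain ⟨u', v', rfl⟩ := exists_eq_vecMulVec_of_det_eq_zero hN
  have hUV : (of ![u, u']).det * (of ![v, v']).det = 0 := by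
    rw [← hMN]; simp [det_fin_two, vecMulVec_apply]; ring
  rcases mul_eq_zero.mp hUV with hU | hV
  · obtain ⟨a, ha, hUa⟩ := exists_mulVec_eq_zero_iff.mpr hU
    have hu : u 0 * a 0 + u 1 * a 1 = 0 := by simpa [Fin.sum_univ_two] using congrFun hUa 0
    have hu' : u' 0 * a 0 + u' 1 * a 1 = 0 := by simpa [Fin.sum_univ_two] using congrFun hUa 1
    refine .inl ⟨a, ha, fun i j => ?_⟩
    fin_cases i <;> simp [swapXZ, ofSlices, Fin.sum_univ_two, vecMulVec_apply]
    · linear_combination v j * hu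
    · linear_combination v' j * hu'
  · obtain ⟨b, hb, hVb⟩ := exists_mulVec_eq_zero_iff.mpr hV
    have hv : v 0 * b 0 + v 1 * b 1 = 0 := by simpa [Fin.sum_univ_two] using congrFun hVb 0
    have hv' : v' 0 * b 0 + v' 1 * b 1 = 0 := by simpa [Fin.sum_univ_two] using congrFun hVb 1
    refine .inr ⟨b, hb, fun i j => ?_⟩
    fin_cases j <;> simp [swapYZ, ofSlices, Fin.sum_univ_two, vecMulVec_apply]
    · linear_combination u i * hv
    · linear_combination u' i * hv'

theorem exists_tensorEquiv_ofSlices_one (hx : ¬ IsZDegenerate (swapXZ A))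
    (hy : ¬ IsZDegenerate (swapYZ A)) : ∃ X, TensorEquiv A (ofSlices 1 X) := by
  rw [← ofSlices_slices A] at hx hy ⊢
  set M := of fun i j => A i j 0
  set N := of fun i j => A i j 1
  obtain ⟨M', N', hM', e⟩ :
      ∃ M' N', IsUnit M'.det ∧ TensorEquiv (ofSlices M N) (ofSlices M' N') := by
    by_cases hM : M.det = 0
    · by_cases hN : N.det = 0
      · by_cases hMN : (M + N).det = 0
        · exact absurd (isZDegenerate_swap_ofSlices_of_det_eq_zero hM hN hMN) (by tauto)
        · have key := tensorEquiv_ofSlices_smul_add (M := M) (N := N) (a := 1) (b := 1) (c := 0)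
            (d := 1) (by norm_num)
          exact ⟨M + N, N, isUnit_iff_ne_zero.mpr hMN, by simpa using key⟩
      · have key := tensorEquiv_ofSlices_smul_add (M := M) (N := N) (a := 0) (b := 1) (c := 1)
          (d := 0) (by norm_num)
        exact ⟨N, M, isUnit_iff_ne_zero.mpr hN, by simpa using key⟩
    · exact ⟨M, N, isUnit_iff_ne_zero.mpr hM, .refl _⟩
  have key := tensorEquiv_ofSlices_mul (M := M') (N := N') (Q := 1)
    (isUnit_nonsing_inv_det M' hM') (by simp)
  rw [nonsing_inv_mul _ hM', mul_one, mul_one] at key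
  exact ⟨_, e.trans key⟩

theorem ofSlices_one_nilpotent_tensorEquiv_T3 : TensorEquiv (ofSlices 1 !![0, 0; 1, 0]) T3 := by
  have key := tensorEquiv_ofSlices_mul (M := 1) (N := !![0, 0; 1, 0]) (P := !![0, 1; 1, 0])
    (Q := 1) (by simp [det_fin_two_of]) (by simp)
  refine key.trans (.of_eq ?_)
  funext i j k
  fin_cases i <;> fin_cases j <;> fin_cases k <;> simp [ofSlices, T3]

/-- The columns of `S` are eigenvectors of `!![0, 0; 1, p]` for `0` and `p`. -/
theorem ofSlices_one_tensorEquiv_T4 {p : ℂ} (hp : p ≠ 0) :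
    TensorEquiv (ofSlices 1 !![0, 0; 1, p]) T4 := by
  have e1 := tensorEquiv_ofSlices_one_of_mul_eq (X := !![0, 0; 1, p]) (Y := !![0, 0; 0, p])
    (S := !![p, 0; -1, 1]) (by simpa [det_fin_two_of] using hp) (by
      ext i j; fin_cases i <;> fin_cases j <;> simp [mul_apply, Fin.sum_univ_two])
  have e2 := tensorEquiv_ofSlices_smul_add (M := 1) (N := !![0, 0; 0, p]) (a := 1) (b := -p⁻¹)
    (c := 0) (d := p⁻¹) (by simpa using hp)
  refine e1.trans (e2.trans (.of_eq ?_))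
  funext i j k
  fin_cases i <;> fin_cases j <;> fin_cases k <;> simp [ofSlices, T4, hp]

theorem tensorEquiv_T3_or_T4 (hz : ¬ IsZDegenerate (ofSlices 1 X)) :
    TensorEquiv (ofSlices 1 X) T3 ∨ TensorEquiv (ofSlices 1 X) T4 := by
  obtain ⟨c, hc⟩ := exists_det_sub_smul_one_eq_zero X
  have e1 : TensorEquiv (ofSlices 1 X) (ofSlices 1 (X - c • 1)) := by
    have key := tensorEquiv_ofSlices_smul_add (M := 1) (N := X) (a := 1) (b := 0) (c := -c)
      (d := 1) (by norm_num)
    simpa [sub_eq_neg_add] using key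
  have hscalar : ∀ d : ℂ, X - c • 1 ≠ d • 1 := by
    intro d hd
    refine hz (e1.symm.isZDegenerate ⟨![d, -1], by simp, fun i j => ?_⟩)
    simp [hd, ofSlices, Fin.sum_univ_two]
    ring
  obtain ⟨S, hS, hXS⟩ := exists_mul_eq_mul_companion hscalar
  rw [hc, neg_zero] at hXS
  have e2 := e1.trans (tensorEquiv_ofSlices_one_of_mul_eq hS hXS)
  by_cases hp : (X - c • 1).trace = 0
  · exact .inl (e2.trans (hp ▸ ofSlices_one_nilpotent_tensorEquiv_T3))
  · exact .inr (e2.trans (ofSlices_one_tensorEquiv_T4 hp))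

theorem exists_mem_canonicalForms_tensorEquiv (hA : A ≠ 0) :
    ∃ T ∈ canonicalForms, TensorEquiv A T := by
  by_cases hz : IsZDegenerate A
  · rcases tensorEquiv_T1_or_T2z_of_isZDegenerate hA hz with h | h
    exacts [⟨T1, by simp [canonicalForms], h⟩, ⟨T2z, by simp [canonicalForms], h⟩]
  by_cases hx : IsZDegenerate (swapXZ A)
  · rcases tensorEquiv_T1_or_T2z_of_isZDegenerate (A := swapXZ A)
      (fun h => hA (congrArg swapXZ h)) hx with h | h
    exacts [⟨T1, by simp [canonicalForms], swapXZ_T1 ▸ h.swapXZ⟩,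
      ⟨T2x, by simp [canonicalForms], swapXZ_T2z ▸ h.swapXZ⟩]
  by_cases hy : IsZDegenerate (swapYZ A)
  · rcases tensorEquiv_T1_or_T2z_of_isZDegenerate (A := swapYZ A)
      (fun h => hA (congrArg swapYZ h)) hy with h | h
    exacts [⟨T1, by simp [canonicalForms], swapYZ_T1 ▸ h.swapYZ⟩,
      ⟨T2y, by simp [canonicalForms], swapYZ_T2z ▸ h.swapYZ⟩]
  obtain ⟨X, e⟩ := exists_tensorEquiv_ofSlices_one hx hy
  rcases tensorEquiv_T3_or_T4 fun h => hz (e.symm.isZDegenerate h) with h | h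
  exacts [⟨T3, by simp [canonicalForms], e.trans h⟩, ⟨T4, by simp [canonicalForms], e.trans h⟩]

end Existence

/-- every nonzero 2×2×2 hypermatrix is equivalent to exactly one
of the canonical forms I, II (in its three versions, one for each choice of the
special factor), III, IV; and these have tensor ranks 1, 2, 2, 2, 3, 2. -/
theorem classification_2_2_2 :
    (∀ A : Fin 2 → Fin 2 → Fin 2 → ℂ, A ≠ 0 →
      ∃! T, T ∈ ({T1, T2x, T2y, T2z, T3, T4} : Set (Fin 2 → Fin 2 → Fin 2 → ℂ)) ∧
        TensorEquiv A T) ∧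
    Trk T1 = 1 ∧ Trk T2x = 2 ∧ Trk T2y = 2 ∧ Trk T2z = 2 ∧ Trk T3 = 3 ∧ Trk T4 = 2 := by
  refine ⟨fun A hA => ?_, trk_T1, trk_T2x, trk_T2y, trk_T2z, trk_T3, trk_T4⟩
  obtain ⟨T, hT, hAT⟩ := exists_mem_canonicalForms_tensorEquiv hA
  exact ⟨T, ⟨hT, hAT⟩, fun T' ⟨hT', hAT'⟩ =>
    eq_of_tensorEquiv_of_mem_canonicalForms hT' hT (hAT'.symm.trans hAT)⟩
end
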